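/- arXiv:2404.00041 — 3 statements merged into one kernel-verified Lean document; each statement's English description precedes it below -/
import Mathlib

section
/- Let F(s, λ) := (1/λ)(s - ∑_{j=0}^{s-1} e^{-λ} λ^j / j!) for an integer s ≥ 1 and real λ ∈ (0, s+1]. Then for every integer k ≥ 1, F(k, k+1) ≥ F(1, 2) = (1 - e^{-2})/2. -/
/-! The Poisson probabilities `e^{-λ} λ^j / j!` with `j < k` sum to at most `1`, so
`F(k, k+1) ≥ (k-1)/(k+1) ≥ 1/2 > (1 - e^{-2})/2` once `k ≥ 3`. The case `k = 1` is an
identity and `k = 2` reduces to `F(2, 3) = (2 - 4e^{-3})/3` together with `e^{-3} ≤ 1/8`. -/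

open Real Finset

lemma sum_exp_neg_mul_pow_div_factorial_le_one {x : ℝ} (hx : 0 ≤ x) (n : ℕ) :
    ∑ j ∈ range n, exp (-x) * x ^ j / j.factorial ≤ 1 := by
  simp_rw [mul_div_assoc, ← mul_sum]
  calc exp (-x) * ∑ j ∈ range n, x ^ j / j.factorial
      ≤ exp (-x) * exp x := by gcongr; exact sum_le_exp_of_nonneg hx n
    _ = 1 := by rw [← exp_add, neg_add_cancel, exp_zero]

lemma exp_neg_three_le : exp (-3) ≤ 1 / 8 := by
  have h8 : (8 : ℝ) ≤ exp 3 := by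
    calc (8 : ℝ) = 2 ^ 3 := by norm_num
      _ ≤ exp 1 ^ 3 := by gcongr; linarith [add_one_le_exp (1 : ℝ)]
      _ = exp 3 := by rw [← exp_nat_mul]; norm_num
  rw [exp_neg, one_div]
  exact inv_anti₀ (by norm_num) h8

theorem F_k_succ_ge (k : ℕ) (hk : 1 ≤ k) :
    let F : ℕ → ℝ → ℝ := fun s lam =>
      (1 / lam) * (s - ∑ j ∈ Finset.range s, Real.exp (-lam) * lam ^ j / Nat.factorial j)
    F k (k + 1) ≥ F 1 2 ∧ F 1 2 = (1 - Real.exp (-2)) / 2 := by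
  intro F
  have hF12 : F 1 2 = (1 - exp (-2)) / 2 := by
    simp only [F, Nat.cast_one, sum_range_one, pow_zero, Nat.factorial_zero]
    ring
  refine ⟨?_, hF12⟩
  rw [hF12, ge_iff_le]
  obtain hk3 | hk3 := Nat.lt_or_ge k 3
  · interval_cases k
    · norm_num [F]
      linarith
    · simp only [F, Nat.cast_ofNat, sum_range_succ]
      norm_num
      linarith [exp_neg_three_le, exp_pos (-2)]
  · have hsum := sum_exp_neg_mul_pow_div_factorial_le_one (by positivity : (0 : ℝ) ≤ k + 1) k
    have hk3' : (3 : ℝ) ≤ k := by exact_mod_cast hk3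
    calc (1 - exp (-2)) / 2 ≤ 1 / 2 := by linarith [exp_pos (-2)]
      _ ≤ (k - 1) / (k + 1) := by rw [div_le_div_iff₀ (by norm_num) (by positivity)]; linarith
      _ ≤ F k (k + 1) := by
        simp only [F, one_div_mul_eq_div]
        gcongr
end

section
/- Let F(s, λ) := (1/λ)(s - ∑_{j=0}^{s-1} e^{-λ} λ^j / j!) for an integer s ≥ 1 and real λ ∈ (0, s+1]. Then for fixed s, the function λ ↦ F(s, λ) is monotonically decreasing on (0, s+1]. -/
/-!
With `P(j; λ) = e^{-λ} λ^j / j!` and `S(λ) = ∑_{j<s} P(j; λ)`, one has `S' = -P(s-1; λ) = -(s/λ) P(s; λ)`,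
so `d/dλ [(s - S)/λ] = (S + s P(s; λ) - s) / λ²`. The numerator is nonpositive because
`S + s P(s; λ) ≤ s (S + P(s; λ)) ≤ s`, the last sum being a partial sum of the Poisson distribution.
-/

open Real Finset Nat

noncomputable def poissonTerm (lam : ℝ) (j : ℕ) : ℝ :=
  exp (-lam) * lam ^ j / j !

lemma poissonTerm_nonneg {lam : ℝ} (hlam : 0 ≤ lam) (j : ℕ) : 0 ≤ poissonTerm lam j := by
  unfold poissonTerm
  positivity

lemma sum_range_poissonTerm_le_one {lam : ℝ} (hlam : 0 ≤ lam) (n : ℕ) :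
    ∑ j ∈ range n, poissonTerm lam j ≤ 1 := by
  have hsum : ∑ j ∈ range n, poissonTerm lam j = exp (-lam) * ∑ j ∈ range n, lam ^ j / j ! := by
    simp only [poissonTerm, mul_sum, mul_div_assoc]
  calc ∑ j ∈ range n, poissonTerm lam j
      ≤ exp (-lam) * exp lam := by
        rw [hsum]
        exact mul_le_mul_of_nonneg_left (sum_le_exp_of_nonneg hlam n) (exp_pos _).le
    _ = 1 := by rw [← exp_add, neg_add_cancel, exp_zero]

lemma mul_poissonTerm (lam : ℝ) (n : ℕ) :
    lam * poissonTerm lam n = (n + 1) * poissonTerm lam (n + 1) := by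
  unfold poissonTerm
  rw [factorial_succ, cast_mul]
  field_simp
  push_cast
  ring

lemma hasDerivAt_poissonTerm {lam : ℝ} (hlam : lam ≠ 0) (n : ℕ) :
    HasDerivAt (fun x => poissonTerm x n) ((n / lam - 1) * poissonTerm lam n) lam := by
  have hpow : (n : ℝ) * lam ^ (n - 1) = n / lam * lam ^ n := by
    cases n with
    | zero => simp
    | succ n => field_simp; simp [pow_succ]
  refine (((hasDerivAt_neg lam).exp.mul (hasDerivAt_pow n lam)).div_const (n ! : ℝ)).congr_deriv ?_
  rw [hpow, poissonTerm]
  ring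

lemma hasDerivAt_sum_range_poissonTerm {lam : ℝ} (hlam : lam ≠ 0) (s : ℕ) :
    HasDerivAt (fun x => ∑ j ∈ range s, poissonTerm x j) (-(s / lam * poissonTerm lam s)) lam := by
  induction s with
  | zero => simpa using hasDerivAt_const lam (0 : ℝ)
  | succ n ih =>
    simp only [sum_range_succ]
    refine (ih.add (hasDerivAt_poissonTerm hlam n)).congr_deriv ?_
    rw [cast_succ, div_mul_eq_mul_div ((n : ℝ) + 1), ← mul_poissonTerm, mul_div_cancel_left₀ _ hlam]
    ring

lemma sum_range_poissonTerm_add_mul_le {lam : ℝ} (hlam : 0 ≤ lam) (s : ℕ) :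
    ∑ j ∈ range s, poissonTerm lam j + s * poissonTerm lam s ≤ s := by
  cases s with
  | zero => simp
  | succ n =>
    have hS := sum_nonneg fun j (_ : j ∈ range (n + 1)) => poissonTerm_nonneg hlam j
    have hle := sum_range_poissonTerm_le_one hlam (n + 2)
    rw [sum_range_succ] at hle
    push_cast
    calc ∑ j ∈ range (n + 1), poissonTerm lam j + (n + 1) * poissonTerm lam (n + 1)
        ≤ (n + 1) * (∑ j ∈ range (n + 1), poissonTerm lam j + poissonTerm lam (n + 1)) := by
          nlinarith [n.cast_nonneg (α := ℝ)]
      _ ≤ n + 1 := mul_le_of_le_one_right (by positivity) hle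

lemma hasDerivAt_inv_mul_sub_sum_range_poissonTerm {lam : ℝ} (hlam : lam ≠ 0) (s : ℕ) :
    HasDerivAt (fun x => (1 / x) * (s - ∑ j ∈ range s, poissonTerm x j))
      ((∑ j ∈ range s, poissonTerm lam j + s * poissonTerm lam s - s) / lam ^ 2) lam := by
  have hinv : HasDerivAt (fun x : ℝ => 1 / x) (-(lam ^ 2)⁻¹) lam := by
    simpa only [one_div] using hasDerivAt_inv hlam
  refine (hinv.mul ((hasDerivAt_sum_range_poissonTerm hlam s).const_sub (s : ℝ))).congr_deriv ?_
  field_simp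
  ring

theorem antitoneOn_inv_mul_sub_sum_range_poissonTerm (s : ℕ) :
    AntitoneOn (fun lam : ℝ => (1 / lam) * (s - ∑ j ∈ range s, poissonTerm lam j)) (Set.Ioi 0) := by
  have hderiv (lam : ℝ) (hlam : 0 < lam) := hasDerivAt_inv_mul_sub_sum_range_poissonTerm hlam.ne' s
  refine antitoneOn_of_hasDerivWithinAt_nonpos (convex_Ioi 0)
    (fun lam hlam => (hderiv lam hlam).continuousAt.continuousWithinAt)
    (fun lam hlam => (hderiv lam (interior_subset hlam)).hasDerivWithinAt) (fun lam hlam => ?_)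
  rw [interior_Ioi] at hlam
  exact div_nonpos_of_nonpos_of_nonneg (by linarith [sum_range_poissonTerm_add_mul_le hlam.le s])
    (sq_nonneg lam)

theorem F_antitone_in_lambda_general (s : ℕ) :
    AntitoneOn
      (fun lam : ℝ =>
        (1 / lam) * (s - ∑ j ∈ Finset.range s, Real.exp (-lam) * lam ^ j / Nat.factorial j))
      (Set.Ioc (0 : ℝ) (s + 1)) :=
  (antitoneOn_inv_mul_sub_sum_range_poissonTerm s).mono Set.Ioc_subset_Ioi_self

theorem F_antitone_in_lambda (s : ℕ) (hs : 1 ≤ s) :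
    AntitoneOn
      (fun lam : ℝ =>
        (1 / lam) * (s - ∑ j ∈ Finset.range s, Real.exp (-lam) * lam ^ j / Nat.factorial j))
      (Set.Ioc (0 : ℝ) (s + 1)) :=
  F_antitone_in_lambda_general s
end

section
/- Let a ∈ (1/(k+1), 1/k]^n be a vector of n item sizes for an integer k ≥ 1, and suppose x ∈ [0,1]^n satisfies ∑_i a_i x_i ≤ 1. If x_i = 1 for at least k indices i, then x_i = 1 for exactly k indices, and for any two indices i ≠ j with x_i < 1 and x_j < 1 we have x_i + x_j < 1. -/
/-!
Every weight exceeds `1 / (k + 1)`, so a set of coordinates on which `x` has mass at least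
`k + 1` would carry weighted sum above `1`. The coordinates with `x i = 1` have mass equal to
their number, so there are at most `k` of them; and with exactly `k` of them, two further
coordinates with `x i + x j ≥ 1` would raise the mass to `k + 1`.
-/

open Finset

section WeightedSum

variable {ι : Type*} {a x : ι → ℝ} {c : ℝ}

theorem mul_sum_lt_sum_mul_of_lt (ha : ∀ l, c < a l) (hx : ∀ l, 0 ≤ x l) {T : Finset ι}
    (hT : 0 < ∑ l ∈ T, x l) : c * ∑ l ∈ T, x l < ∑ l ∈ T, a l * x l := by
  obtain ⟨l, hlT, hxl⟩ := exists_lt_of_sum_lt (s := T) (f := 0) (g := x) (by simpa using hT)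
  rw [mul_sum]
  exact sum_lt_sum (fun i _ => mul_le_mul_of_nonneg_right (ha i).le (hx i))
    ⟨l, hlT, mul_lt_mul_of_pos_right (ha l) hxl⟩

theorem mul_sum_lt_one_of_sum_mul_le_one [Fintype ι] (hc : 0 < c) (ha : ∀ l, c < a l)
    (hx : ∀ l, 0 ≤ x l) (hfeas : ∑ l, a l * x l ≤ 1) (T : Finset ι) :
    c * ∑ l ∈ T, x l < 1 := by
  rcases (sum_nonneg fun l _ => hx l : 0 ≤ ∑ l ∈ T, x l).eq_or_lt with hT | hT
  · rw [← hT, mul_zero]; exact one_pos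
  have ha0 : ∀ l, 0 ≤ a l * x l := fun l => mul_nonneg (hc.trans (ha l)).le (hx l)
  calc c * ∑ l ∈ T, x l < ∑ l ∈ T, a l * x l := mul_sum_lt_sum_mul_of_lt ha hx hT
    _ ≤ ∑ l, a l * x l := sum_le_sum_of_subset_of_nonneg (subset_univ T) fun l _ _ => ha0 l
    _ ≤ 1 := hfeas

end WeightedSum

theorem class_k_ones_count_general (n k : ℕ) (a x : Fin n → ℝ)
    (ha : ∀ i, a i ∈ Set.Ioc (1 / ((k : ℝ) + 1)) (1 / (k : ℝ)))
    (hx : ∀ i, x i ∈ Set.Icc (0 : ℝ) 1)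
    (hfeas : ∑ i, a i * x i ≤ 1)
    (hmany : k ≤ {i | x i = 1}.ncard) :
    {i | x i = 1}.ncard = k ∧
      ∀ i j, i ≠ j → x i < 1 → x j < 1 → x i + x j < 1 := by
  have hmass (T : Finset (Fin n)) : ∑ l ∈ T, x l < k + 1 := by
    have := mul_sum_lt_one_of_sum_mul_le_one (by positivity) (fun l => (ha l).1)
      (fun l => (hx l).1) hfeas T
    rwa [one_div, inv_mul_lt_iff₀ (by positivity), mul_one] at this
  set S := univ.filter fun i => x i = 1
  have hS : {i | x i = 1} = ↑S := by simp [S]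
  have hSmass : ∑ l ∈ S, x l = S.card := by
    rw [sum_congr rfl fun l hl => (mem_filter.1 hl).2, sum_const, nsmul_one]
  rw [hS, Set.ncard_coe_finset] at hmany ⊢
  have hcard : S.card = k := by
    have hlt : (S.card : ℝ) < k + 1 := hSmass ▸ hmass S
    have : S.card < k + 1 := by exact_mod_cast hlt
    omega
  refine ⟨hcard, fun i j hij hxi hxj => ?_⟩
  have hiS : i ∉ insert j S := by simp [S, hij, hxi.ne]
  have hjS : j ∉ S := by simp [S, hxj.ne]
  have hmassij := hmass (insert i (insert j S))
  rw [sum_insert hiS, sum_insert hjS, hSmass, hcard] at hmassij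
  linarith

theorem class_k_ones_count (n k : ℕ) (hk : 1 ≤ k) (a x : Fin n → ℝ)
    (ha : ∀ i, a i ∈ Set.Ioc (1 / ((k : ℝ) + 1)) (1 / (k : ℝ)))
    (hx : ∀ i, x i ∈ Set.Icc (0 : ℝ) 1)
    (hfeas : ∑ i, a i * x i ≤ 1)
    (hmany : k ≤ {i | x i = 1}.ncard) :
    {i | x i = 1}.ncard = k ∧
      ∀ i j, i ≠ j → x i < 1 → x j < 1 → x i + x j < 1 :=
  class_k_ones_count_general n k a x ha hx hfeas hmany
end
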